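/- arXiv:1902.06249 — 7 statements merged into one kernel-verified Lean document; each statement's English description precedes it below -/
import Mathlib

section
/- Let m be a Borel measure on ℝ that is finite on compact sets, and let q be the associated function. Then for all real numbers y < z and all x ∈ ℝ, one has q(z,x) = q(y,x) − q(y,z) − D·(x − z), where D = m((y,z)) + (1/2) m({y}) + (1/2) m({z}). -/
open MeasureTheory

/-- Signed measure of the open interval between `y` and `u`:
`m((y,u))` for `u ≥ y` and `-m((u,y))` for `u < y`. -/
noncomputable def signedIoo (m : Measure ℝ) (y u : ℝ) : ℝ :=
  if y ≤ u then (m (Set.Ioo y u)).toReal else -(m (Set.Ioo u y)).toReal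

/-- The function `q(y,x) = (1/2) m({y}) |x−y| + ∫_y^x m((y,u)) du`. -/
noncomputable def qFun (m : Measure ℝ) (y x : ℝ) : ℝ :=
  (1 / 2) * (m {y}).toReal * |x - y| + ∫ u in y..x, signedIoo m y u

/-!
Put `F_y(u) = signedIoo m y u + m({y}) [u > y]`; up to the atom of `m` at `u`, this is the signed
mass `m([y, u))`. So away from the countably many atoms of `m`, hence Lebesgue-a.e., `F_y - F_z` is
the constant `m([y, z)) = m((y, z)) + m({y})`. Integrating over `[z, x]`, with `max (u - c) 0` a
primitive of `[u > c]`, gives the formula.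
-/

open Set Interval

lemma ae_measure_singleton_eq_zero {α : Type*} [MeasurableSpace α] [MeasurableSingletonClass α]
    (μ ν : Measure α) [NullSingletonClass μ] [SFinite ν] : ∀ᵐ u ∂μ, ν {u} = 0 := by
  have hatoms : {u : α | 0 < ν {u}}.Countable :=
    Measure.countable_meas_pos_of_disjoint_iUnion measurableSet_singleton
      fun a b hab => disjoint_singleton.2 hab
  filter_upwards [hatoms.ae_notMem μ] with u hu
  simpa using hu

lemma intervalIntegrable_indicator_Ioi_one (a b c : ℝ) :
    IntervalIntegrable ((Ioi c).indicator (1 : ℝ → ℝ)) volume a b := by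
  constructor <;> exact (integrableOn_const (by simp)).indicator measurableSet_Ioi

lemma integral_indicator_Ioi_one_of_left (c b : ℝ) :
    ∫ u in c..b, (Ioi c).indicator (1 : ℝ → ℝ) u = max (b - c) 0 := by
  rcases le_total c b with hcb | hbc
  · have hone : ∀ u ∈ Ι c b, (Ioi c).indicator (1 : ℝ → ℝ) u = 1 := fun u hu => by
      rw [uIoc_of_le hcb] at hu
      exact indicator_of_mem hu.1 _
    rw [intervalIntegral.integral_congr_ae (.of_forall hone), intervalIntegral.integral_const,
      smul_eq_mul, mul_one, max_eq_left (sub_nonneg.2 hcb)]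
  · have hzero : ∀ u ∈ Ι c b, (Ioi c).indicator (1 : ℝ → ℝ) u = 0 := fun u hu => by
      rw [uIoc_of_ge hbc] at hu
      exact indicator_of_notMem (not_lt.2 hu.2) _
    rw [intervalIntegral.integral_congr_ae (.of_forall hzero), intervalIntegral.integral_zero,
      max_eq_right (sub_nonpos.2 hbc)]

lemma integral_indicator_Ioi_one (a b c : ℝ) :
    ∫ u in a..b, (Ioi c).indicator (1 : ℝ → ℝ) u = max (b - c) 0 - max (a - c) 0 := by
  rw [← intervalIntegral.integral_interval_sub_left (intervalIntegrable_indicator_Ioi_one c b c)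
    (intervalIntegrable_indicator_Ioi_one c a c), integral_indicator_Ioi_one_of_left,
    integral_indicator_Ioi_one_of_left]

section SignedIoo

variable {m : Measure ℝ} {a b c y z u : ℝ}

lemma signedIoo_of_le (h : y ≤ u) : signedIoo m y u = m.real (Ioo y u) := if_pos h

lemma signedIoo_of_ge (h : u ≤ y) : signedIoo m y u = -m.real (Ioo u y) := by
  rcases h.lt_or_eq with h | rfl
  · exact if_neg h.not_ge
  · simp [signedIoo]

variable [IsFiniteMeasureOnCompacts m]

lemma measureReal_Ioo_eq_add (hab : a < b) (hbc : b < c) :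
    m.real (Ioo a c) = m.real (Ioo a b) + m.real {b} + m.real (Ioo b c) := by
  rw [← Ioc_union_Ioo_eq_Ioo hab.le hbc,
    measureReal_union (Ioc_disjoint_Ioi_same.mono_right Ioo_subset_Ioi_self) measurableSet_Ioo
      measure_Ioc_lt_top.ne measure_Ioo_lt_top.ne,
    ← Ioo_insert_right hab, insert_eq, union_comm,
    measureReal_union (disjoint_singleton_right.2 fun h => h.2.false) (measurableSet_singleton b)
      measure_Ioo_lt_top.ne measure_singleton_lt_top.ne]

lemma signedIoo_monotone (y : ℝ) : Monotone (signedIoo m y) := by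
  intro u v huv
  rcases le_total y u with hyu | huy
  · rw [signedIoo_of_le hyu, signedIoo_of_le (hyu.trans huv)]
    exact measureReal_mono (Ioo_subset_Ioo_right huv) measure_Ioo_lt_top.ne
  rcases le_total y v with hyv | hvy
  · rw [signedIoo_of_ge huy, signedIoo_of_le hyv]
    exact (neg_nonpos.2 measureReal_nonneg).trans measureReal_nonneg
  · rw [signedIoo_of_ge huy, signedIoo_of_ge hvy, neg_le_neg_iff]
    exact measureReal_mono (Ioo_subset_Ioo_left huv) measure_Ioo_lt_top.ne

lemma signedIoo_add_indicator_eq (hyz : y < z) (hu : m {u} = 0) :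
    signedIoo m y u + m.real {y} * (Ioi y).indicator 1 u
      = signedIoo m z u + m.real {z} * (Ioi z).indicator 1 u + (m.real (Ioo y z) + m.real {y}) := by
  have hu' : m.real {u} = 0 := by simp [Measure.real, hu]
  rcases le_or_gt u y with huy | hyu
  · rw [signedIoo_of_ge huy, signedIoo_of_ge (huy.trans hyz.le),
      indicator_of_notMem (notMem_Ioi.2 huy), indicator_of_notMem (notMem_Ioi.2 (huy.trans hyz.le))]
    rcases huy.lt_or_eq with huy | rfl
    · linarith [measureReal_Ioo_eq_add (m := m) huy hyz]
    · simp [hu']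
  rcases le_or_gt u z with huz | hzu
  · rw [signedIoo_of_le hyu.le, signedIoo_of_ge huz, indicator_of_mem (mem_Ioi.2 hyu),
      indicator_of_notMem (notMem_Ioi.2 huz), Pi.one_apply]
    rcases huz.lt_or_eq with huz | rfl
    · linarith [measureReal_Ioo_eq_add (m := m) hyu huz]
    · simp
  · rw [signedIoo_of_le hyu.le, signedIoo_of_le hzu.le, indicator_of_mem (mem_Ioi.2 hyu),
      indicator_of_mem (mem_Ioi.2 hzu), Pi.one_apply]
    linarith [measureReal_Ioo_eq_add (m := m) hyz hzu]

lemma signedIoo_intervalIntegrable (y a b : ℝ) : IntervalIntegrable (signedIoo m y) volume a b :=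
  (signedIoo_monotone y).intervalIntegrable

lemma integral_signedIoo_eq (hyz : y < z) (a b : ℝ) :
    ∫ u in a..b, signedIoo m y u
      = (∫ u in a..b, signedIoo m z u) + m.real {z} * (max (b - z) 0 - max (a - z) 0)
        - m.real {y} * (max (b - y) 0 - max (a - y) 0)
        + (m.real (Ioo y z) + m.real {y}) * (b - a) := by
  have h := intervalIntegral.integral_congr_ae (a := a) (b := b)
    ((ae_measure_singleton_eq_zero volume m).mono fun u hu _ => signedIoo_add_indicator_eq hyz hu)
  rw [intervalIntegral.integral_add (signedIoo_intervalIntegrable y a b)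
      ((intervalIntegrable_indicator_Ioi_one a b y).const_mul _),
    intervalIntegral.integral_add ((signedIoo_intervalIntegrable z a b).add
      ((intervalIntegrable_indicator_Ioi_one a b z).const_mul _)) intervalIntegrable_const,
    intervalIntegral.integral_add (signedIoo_intervalIntegrable z a b)
      ((intervalIntegrable_indicator_Ioi_one a b z).const_mul _),
    intervalIntegral.integral_const_mul, intervalIntegral.integral_const_mul,
    integral_indicator_Ioi_one, integral_indicator_Ioi_one, intervalIntegral.integral_const,
    smul_eq_mul] at h
  linarith

end SignedIoo

theorem q_translation_formula (m : Measure ℝ) [IsFiniteMeasureOnCompacts m]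
    (y z x : ℝ) (hyz : y < z) :
    qFun m z x = qFun m y x - qFun m y z -
      ((m (Set.Ioo y z)).toReal + (1 / 2) * (m {y}).toReal
        + (1 / 2) * (m {z}).toReal) * (x - z) := by
  have hsplit := intervalIntegral.integral_add_adjacent_intervals
    (signedIoo_intervalIntegrable (m := m) y y z) (signedIoo_intervalIntegrable y z x)
  have hshift := integral_signedIoo_eq (m := m) hyz z x
  have hpos : ∀ t : ℝ, max t 0 = (t + |t|) / 2 := fun t => by
    cases abs_cases t <;> cases max_cases t 0 <;> linarith
  simp only [qFun, ← Measure.real_def, ← hsplit, hshift, hpos, sub_self, abs_zero,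
    abs_of_pos (sub_pos.2 hyz)]
  ring
end

section
/- Let m be a Borel measure on ℝ that is finite on compact sets, and let q be the associated function. Then for all real numbers α < y < β, one has ∫_{(α,β)} G_{α,β}(y,u) m(du) = ((β−y)/(β−α)) · q(y,α) + ((y−α)/(β−α)) · q(y,β), where G_{α,β}(u,v) = (β − max(u,v))·(min(u,v) − α)/(β − α) is the Green function of the interval (α,β). -/
/-!
Split `(α, β)` at `y`. On `(α, y)` the Green function is `(β - y)(u - α)/(β - α)`, on `(y, β)` it
is `(y - α)(β - u)/(β - α)`, and the atom at `y` contributes `m{y}(β - y)(y - α)/(β - α)`, which is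
the sum of the two weighted `m{y}` terms on the right. The remaining terms agree because, by Tonelli on the
triangle `{a < v < u < b}`, `∫_a^b m((a, u)) du = ∫_{(a,b)} (b - v) m(dv)`, and symmetrically
`∫_a^b m((u, b)) du = ∫_{(a,b)} (v - a) m(dv)`.
-/

open MeasureTheory

open Set

theorem setLIntegral_measure_Ioo_swap {α : Type*} [TopologicalSpace α] [LinearOrder α]
    [OrderClosedTopology α] [SecondCountableTopology α] [MeasurableSpace α]
    [OpensMeasurableSpace α] (μ ν : Measure α) [SFinite μ] [SFinite ν] (a b : α) :
    ∫⁻ u in Ioo a b, ν (Ioo a u) ∂μ = ∫⁻ v in Ioo a b, μ (Ioo v b) ∂ν := by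
  have hs : MeasurableSet {p : α × α | p.2 < p.1} :=
    measurableSet_lt measurable_snd measurable_fst
  calc ∫⁻ u in Ioo a b, ν (Ioo a u) ∂μ
      = (μ.restrict (Ioo a b)).prod (ν.restrict (Ioo a b)) {p | p.2 < p.1} := by
        rw [Measure.prod_apply hs]
        refine setLIntegral_congr_fun measurableSet_Ioo fun u hu => ?_
        rw [Measure.restrict_apply (measurable_prodMk_left hs)]
        congr 1
        ext v
        simp only [mem_Ioo, mem_inter_iff, mem_preimage, mem_ofPred_eq]
        constructor
        · rintro ⟨hav, hvu⟩; exact ⟨hvu, hav, hvu.trans hu.2⟩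
        · rintro ⟨hvu, hav, -⟩; exact ⟨hav, hvu⟩
    _ = ∫⁻ v in Ioo a b, μ (Ioo v b) ∂ν := by
        rw [Measure.prod_apply_symm hs]
        refine setLIntegral_congr_fun measurableSet_Ioo fun v hv => ?_
        rw [Measure.restrict_apply (measurable_prodMk_right hs)]
        congr 1
        ext u
        simp only [mem_Ioo, mem_inter_iff, mem_preimage, mem_ofPred_eq]
        constructor
        · rintro ⟨hvu, -, hub⟩; exact ⟨hvu, hub⟩
        · rintro ⟨hvu, hub⟩; exact ⟨hvu, hv.1.trans hvu, hub⟩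

theorem setIntegral_measure_Ioo_swap (μ ν : Measure ℝ) [IsFiniteMeasureOnCompacts μ]
    [IsFiniteMeasureOnCompacts ν] (a b : ℝ) :
    ∫ u in Ioo a b, (ν (Ioo a u)).toReal ∂μ = ∫ v in Ioo a b, (μ (Ioo v b)).toReal ∂ν := by
  have hν : Monotone fun u => ν (Ioo a u) := fun _ _ h => measure_mono (Ioo_subset_Ioo_right h)
  have hμ : Antitone fun v => μ (Ioo v b) := fun _ _ h => measure_mono (Ioo_subset_Ioo_left h)
  rw [integral_toReal hν.measurable.aemeasurable (ae_of_all _ fun _ => measure_Ioo_lt_top),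
    integral_toReal hμ.measurable.aemeasurable (ae_of_all _ fun _ => measure_Ioo_lt_top),
    setLIntegral_measure_Ioo_swap]

theorem setIntegral_Ioo_eq_add_add {E : Type*} [NormedAddCommGroup E] [NormedSpace ℝ E]
    [CompleteSpace E] {m : Measure ℝ} {f : ℝ → E} {a b c : ℝ} (hac : a < c) (hcb : c < b)
    (hf : IntegrableOn f (Ioo a b) m) :
    ∫ u in Ioo a b, f u ∂m
      = ∫ u in Ioo a c, f u ∂m + m.real {c} • f c + ∫ u in Ioo c b, f u ∂m := by
  have hIco : IntegrableOn f (Ico c b) m := hf.mono_set (Ico_subset_Ioo_left hac)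
  rw [← Ioo_union_Ico_eq_Ioo hac hcb.le,
    setIntegral_union (disjoint_left.2 fun _ hu hu' => lt_irrefl c (hu'.1.trans_lt hu.2))
      measurableSet_Ico (hf.mono_set (Ioo_subset_Ioo_right hcb.le)) hIco,
    ← Ioo_insert_left hcb, insert_eq,
    setIntegral_union (disjoint_singleton_left.2 (lt_irrefl c ·.1)) measurableSet_Ioo
      (hIco.mono_set (singleton_subset_iff.2 (left_mem_Ico.2 hcb)))
      (hIco.mono_set Ioo_subset_Ico_self),
    integral_singleton, add_assoc]

theorem qFun_of_le (m : Measure ℝ) [IsFiniteMeasureOnCompacts m] {y x : ℝ} (h : y ≤ x) :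
    qFun m y x = 1 / 2 * m.real {y} * (x - y) + ∫ v in Ioo y x, (x - v) ∂m := by
  rw [qFun, abs_of_nonneg (sub_nonneg.2 h)]
  congr 1
  calc ∫ u in y..x, signedIoo m y u = ∫ u in Ioo y x, (m (Ioo y u)).toReal := by
        rw [intervalIntegral.integral_of_le h, integral_Ioc_eq_integral_Ioo]
        exact setIntegral_congr_fun measurableSet_Ioo fun u hu => if_pos hu.1.le
    _ = ∫ v in Ioo y x, (volume (Ioo v x)).toReal ∂m := setIntegral_measure_Ioo_swap _ _ _ _
    _ = ∫ v in Ioo y x, (x - v) ∂m :=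
        setIntegral_congr_fun measurableSet_Ioo fun v hv => by simp [Real.volume_Ioo, hv.2.le]

theorem qFun_of_ge (m : Measure ℝ) [IsFiniteMeasureOnCompacts m] {y x : ℝ} (h : x ≤ y) :
    qFun m y x = 1 / 2 * m.real {y} * (y - x) + ∫ v in Ioo x y, (v - x) ∂m := by
  rw [qFun, abs_of_nonpos (sub_nonpos.2 h), neg_sub]
  congr 1
  calc ∫ u in y..x, signedIoo m y u = ∫ u in Ioo x y, (m (Ioo u y)).toReal := by
        rw [intervalIntegral.integral_symm, intervalIntegral.integral_of_le h,
          integral_Ioc_eq_integral_Ioo, ← integral_neg]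
        exact setIntegral_congr_fun measurableSet_Ioo fun u hu => by
          simp [signedIoo, hu.2.not_ge]
    _ = ∫ v in Ioo x y, (volume (Ioo x v)).toReal ∂m :=
        (setIntegral_measure_Ioo_swap _ _ _ _).symm
    _ = ∫ v in Ioo x y, (v - x) ∂m :=
        setIntegral_congr_fun measurableSet_Ioo fun v hv => by simp [Real.volume_Ioo, hv.1.le]

theorem integral_green_eq (m : Measure ℝ) [IsFiniteMeasureOnCompacts m]
    (α β y : ℝ) (h1 : α < y) (h2 : y < β) :
    ∫ u in Set.Ioo α β, (β - max y u) * (min y u - α) / (β - α) ∂m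
      = ((β - y) / (β - α)) * qFun m y α + ((y - α) / (β - α)) * qFun m y β := by
  have hg : Continuous fun u => (β - max y u) * (min y u - α) / (β - α) := by fun_prop
  have hleft : ∫ u in Ioo α y, (β - max y u) * (min y u - α) / (β - α) ∂m
      = (β - y) / (β - α) * ∫ u in Ioo α y, (u - α) ∂m := by
    rw [← integral_const_mul]
    refine setIntegral_congr_fun measurableSet_Ioo fun u hu => ?_
    rw [max_eq_left hu.2.le, min_eq_right hu.2.le]
    ring
  have hright : ∫ u in Ioo y β, (β - max y u) * (min y u - α) / (β - α) ∂m
      = (y - α) / (β - α) * ∫ u in Ioo y β, (β - u) ∂m := by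
    rw [← integral_const_mul]
    refine setIntegral_congr_fun measurableSet_Ioo fun u hu => ?_
    rw [max_eq_right hu.1.le, min_eq_left hu.1.le]
    ring
  rw [setIntegral_Ioo_eq_add_add h1 h2 (hg.integrableOn_Icc.mono_set Ioo_subset_Icc_self),
    hleft, hright, qFun_of_ge m h1.le, qFun_of_le m h2.le, max_self, min_self, smul_eq_mul]
  field_simp
  ring
end

section
/- Let m be a Borel measure on ℝ such that 0 < m([a,b]) < ∞ for all real a < b, let y ∈ ℝ and a₀ > 0. Then the function [0,a₀] ∋ a ↦ (1/2) ∫_ℝ (a − |u − y|)⁺ m(du) is continuous, strictly increasing, and equals 0 at a = 0. Consequently, for every h with 0 < h ≤ (1/2) ∫_ℝ (a₀ − |u − y|)⁺ m(du), there exists a unique a ∈ (0, a₀] satisfying (1/2) ∫_ℝ (a − |u − y|)⁺ m(du) = h. -/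
/-! The integrand `u ↦ (a - |u - y|)⁺` is a continuous tent of compact support, so it is integrable
against the locally finite measure `m`, and dominated convergence makes the integral continuous
in `a`. For `0 ≤ a < b` the difference of the two tents is a nonnegative continuous function,
nonzero at `y`; since `m` charges every nonempty open set its integral is positive. Existence
then follows from the intermediate value theorem and uniqueness from strict monotonicity.
-/

open MeasureTheory Set

lemma isFiniteMeasureOnCompacts_of_Icc_lt_top (m : Measure ℝ)
    (hm : ∀ a b : ℝ, a < b → m (Icc a b) < ⊤) : IsFiniteMeasureOnCompacts m := by
  refine ⟨fun K hK => ?_⟩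
  obtain ⟨l, hl⟩ := hK.bddBelow
  obtain ⟨u, hu⟩ := hK.bddAbove
  have hKsub : K ⊆ Icc l (max u (l + 1)) := fun x hx => ⟨hl hx, (hu hx).trans (le_max_left _ _)⟩
  exact (measure_mono hKsub).trans_lt (hm _ _ ((lt_add_one l).trans_le (le_max_right _ _)))

lemma isOpenPosMeasure_of_Icc_pos (m : Measure ℝ) (hm : ∀ a b : ℝ, a < b → 0 < m (Icc a b)) :
    m.IsOpenPosMeasure := by
  refine ⟨fun U hU ⟨x, hx⟩ => ?_⟩
  obtain ⟨ε, hε, hball⟩ := Metric.isOpen_iff.1 hU x hx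
  have hIcc : Icc (x - ε / 2) (x + ε / 2) ⊆ U := fun z hz =>
    hball <| by rw [Real.ball_eq_Ioo]; exact ⟨by linarith [hz.1], by linarith [hz.2]⟩
  exact ((hm _ _ (by linarith)).trans_le (measure_mono hIcc)).ne'

section Tent

variable (m : Measure ℝ) (y : ℝ)

lemma hasCompactSupport_tent (a : ℝ) : HasCompactSupport fun u : ℝ => max (a - |u - y|) 0 := by
  refine HasCompactSupport.intro (isCompact_closedBall y |a|) fun u hu => max_eq_right ?_
  rw [Metric.mem_closedBall, Real.dist_eq, not_le] at hu
  linarith [le_abs_self a]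

variable [IsFiniteMeasureOnCompacts m]

lemma integrable_tent (a : ℝ) : Integrable (fun u : ℝ => max (a - |u - y|) 0) m :=
  (by fun_prop : Continuous _).integrable_of_hasCompactSupport (hasCompactSupport_tent y a)

lemma continuous_integral_tent : Continuous fun a : ℝ => ∫ u, max (a - |u - y|) 0 ∂m := by
  refine continuous_iff_continuousAt.2 fun a => ?_
  refine continuousAt_of_dominated (bound := fun u => max (a + 1 - |u - y|) 0)
    (.of_forall fun b => (integrable_tent m y b).aestronglyMeasurable) ?_
    (integrable_tent m y (a + 1)) (.of_forall fun u => by fun_prop)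
  filter_upwards [eventually_lt_nhds (lt_add_one a)] with b hb
  refine .of_forall fun u => ?_
  rw [Real.norm_of_nonneg (le_max_right _ _)]
  exact max_le_max (by linarith) le_rfl

lemma strictMonoOn_integral_tent [m.IsOpenPosMeasure] :
    StrictMonoOn (fun a : ℝ => ∫ u, max (a - |u - y|) 0 ∂m) (Ici 0) := by
  intro a ha b _ hab
  have hpos : 0 < ∫ u, (max (b - |u - y|) 0 - max (a - |u - y|) 0) ∂m := by
    refine Continuous.integral_pos_of_hasCompactSupport_nonneg_nonzero (x := y) (by fun_prop)
      ((hasCompactSupport_tent y b).sub (hasCompactSupport_tent y a))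
      (fun u => sub_nonneg.2 (max_le_max (by linarith) le_rfl)) ?_
    simp only [sub_self, abs_zero, sub_zero, max_eq_left (mem_Ici.1 ha),
      max_eq_left ((mem_Ici.1 ha).trans hab.le)]
    exact (sub_pos.2 hab).ne'
  rw [integral_sub (integrable_tent m y b) (integrable_tent m y a)] at hpos
  exact sub_pos.1 hpos

end Tent

theorem strictMono_and_unique_solution_expected_exit_time
    (m : Measure ℝ)
    (hm : ∀ a b : ℝ, a < b → 0 < m (Set.Icc a b) ∧ m (Set.Icc a b) < ⊤)
    (y a₀ : ℝ) (ha₀ : 0 < a₀) :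
    ContinuousOn (fun a : ℝ => (1 / 2) * ∫ u, max (a - |u - y|) 0 ∂m)
      (Set.Icc 0 a₀) ∧
    StrictMonoOn (fun a : ℝ => (1 / 2) * ∫ u, max (a - |u - y|) 0 ∂m)
      (Set.Icc 0 a₀) ∧
    (1 / 2) * (∫ u, max ((0 : ℝ) - |u - y|) 0 ∂m) = 0 ∧
    ∀ h : ℝ, 0 < h → h ≤ (1 / 2) * ∫ u, max (a₀ - |u - y|) 0 ∂m →
      ∃! a : ℝ, a ∈ Set.Ioc 0 a₀ ∧ (1 / 2) * ∫ u, max (a - |u - y|) 0 ∂m = h := by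
  have : IsFiniteMeasureOnCompacts m :=
    isFiniteMeasureOnCompacts_of_Icc_lt_top m fun a b hab => (hm a b hab).2
  have : m.IsOpenPosMeasure := isOpenPosMeasure_of_Icc_pos m fun a b hab => (hm a b hab).1
  have hcont : ContinuousOn (fun a : ℝ => (1 / 2) * ∫ u, max (a - |u - y|) 0 ∂m) (Icc 0 a₀) :=
    (continuous_const.mul (continuous_integral_tent m y)).continuousOn
  have hmono : StrictMonoOn (fun a : ℝ => (1 / 2) * ∫ u, max (a - |u - y|) 0 ∂m) (Icc 0 a₀) :=
    ((strictMono_mul_left_of_pos (by norm_num)).comp_strictMonoOn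
      (strictMonoOn_integral_tent m y)).mono Icc_subset_Ici_self
  have hzero : (1 / 2) * (∫ u, max ((0 : ℝ) - |u - y|) 0 ∂m) = 0 := by simp
  refine ⟨hcont, hmono, hzero, fun h h0 hle => ?_⟩
  obtain ⟨a, ha, rfl⟩ := intermediate_value_Ioc ha₀.le hcont (by rw [hzero]; exact ⟨h0, hle⟩)
  exact ⟨a, ⟨ha, rfl⟩, fun b hb =>
    hmono.injOn (Ioc_subset_Icc_self hb.1) (Ioc_subset_Icc_self ha) hb.2⟩
end

section
/- Let σ > 0, h > 0 and y > 0, and set a = y·√(1 − e^{−σ² h}). Then 0 < a < y and a² · ∫_{−1}^{1} (1 − |z|) / (σ² (y + a z)²) dz = h. -/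
/-!
Splitting at `0` and reflecting `[-1, 0]` onto `[0, 1]`, the integral becomes elementary:
`a² ∫_{-1}^{1} (1 - |z|) / (y + a z)² dz = -log (1 - (a / y)²)` whenever `|a| < y`.
The scale `a = y √(1 - e^{-σ² h})` is exactly the one with `1 - (a / y)² = e^{-σ² h}`.
-/

open Real Set intervalIntegral

lemma mul_integral_zero_one_one_sub_abs_div_sq {y a : ℝ} (hy : 0 < y) (hya : 0 < y + a) :
    a ^ 2 * ∫ z in (0 : ℝ)..1, (1 - |z|) / (y + a * z) ^ 2 = log y - log (y + a) + a / y := by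
  rcases eq_or_ne a 0 with rfl | ha
  · simp
  have hpos : ∀ t ∈ uIcc (0 : ℝ) 1, 0 < y + a * t := by
    intro t ht
    rw [uIcc_of_le zero_le_one] at ht
    rcases le_total 0 a with h | h
    · nlinarith [mul_nonneg h ht.1]
    · nlinarith [mul_nonneg_of_nonpos_of_nonpos h (sub_nonpos.mpr ht.2)]
  have hderiv : ∀ t ∈ uIcc (0 : ℝ) 1, HasDerivAt
      (fun s => -(log (y + a * s) + (y + a) / (y + a * s)) / a ^ 2)
      ((1 - |t|) / (y + a * t) ^ 2) t := by
    intro t ht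
    have hlin : HasDerivAt (fun s => y + a * s) a t := by
      simpa using ((hasDerivAt_id t).const_mul a).const_add y
    have hne := (hpos t ht).ne'
    refine (((hlin.log hne).add ((hasDerivAt_const t (y + a)).div hlin hne)).neg.div_const
      (a ^ 2)).congr_deriv ?_
    rw [uIcc_of_le zero_le_one] at ht
    rw [abs_of_nonneg ht.1]
    field_simp
    ring
  have hcont : ContinuousOn (fun t => (1 - |t|) / (y + a * t) ^ 2) (uIcc 0 1) :=
    ContinuousOn.div (by fun_prop) (by fun_prop) fun t ht => (pow_pos (hpos t ht) 2).ne'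
  rw [integral_eq_sub_of_hasDerivAt hderiv hcont.intervalIntegrable]
  field_simp [hy.ne']
  simp only [mul_zero, add_zero]
  ring

lemma mul_integral_one_sub_abs_div_sq {y a : ℝ} (ha : |a| < y) :
    a ^ 2 * ∫ z in (-1 : ℝ)..1, (1 - |z|) / (y + a * z) ^ 2 = -log (1 - (a / y) ^ 2) := by
  obtain ⟨hya, hay⟩ := abs_lt.mp ha
  have hy : 0 < y := (abs_nonneg a).trans_lt ha
  have hint : IntervalIntegrable (fun z => (1 - |z|) / (y + a * z) ^ 2) MeasureTheory.volume
      (-1) 1 := by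
    refine ContinuousOn.intervalIntegrable (ContinuousOn.div (by fun_prop) (by fun_prop) ?_)
    intro z hz
    rw [uIcc_of_le (by norm_num)] at hz
    have hle : |a * z| < y := by
      rw [abs_mul]
      exact (mul_le_of_le_one_right (abs_nonneg a) (abs_le.mpr hz)).trans_lt ha
    have hpos : 0 < y + a * z := by linarith [neg_abs_le (a * z)]
    positivity
  have hreflect : ∫ z in (-1 : ℝ)..0, (1 - |z|) / (y + a * z) ^ 2
      = ∫ z in (0 : ℝ)..1, (1 - |z|) / (y + -a * z) ^ 2 := by
    simpa using (integral_comp_neg (a := 0) (b := 1)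
      (fun z => (1 - |z|) / (y + a * z) ^ 2)).symm
  have hfactor : 1 - (a / y) ^ 2 = (y + a) * (y - a) / y ^ 2 := by
    field_simp
    ring
  have hzero : (0 : ℝ) ∈ uIcc (-1) 1 := by simp [uIcc_of_le]
  rw [← integral_add_adjacent_intervals
    (hint.mono_set (uIcc_subset_uIcc left_mem_uIcc hzero))
    (hint.mono_set (uIcc_subset_uIcc hzero right_mem_uIcc)), hreflect, mul_add,
    mul_integral_zero_one_one_sub_abs_div_sq hy (by linarith),
    ← neg_sq, mul_integral_zero_one_one_sub_abs_div_sq hy (by linarith), ← sub_eq_add_neg,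
    hfactor, log_div (by nlinarith) (by positivity), log_mul (by linarith) (by linarith), log_pow]
  push_cast
  ring

theorem emcel_scale_factor_gbm (σ h y : ℝ) (hσ : 0 < σ) (hh : 0 < h) (hy : 0 < y)
    (a : ℝ) (ha : a = y * Real.sqrt (1 - Real.exp (-σ^2 * h))) :
    0 < a ∧ a < y ∧
      a^2 * ∫ z in (-1 : ℝ)..1, (1 - |z|) / (σ^2 * (y + a * z)^2) = h := by
  have hexp_lt : exp (-σ ^ 2 * h) < 1 := exp_lt_one_iff.mpr (by nlinarith [pow_pos hσ 2])
  have hs : 0 < 1 - exp (-σ ^ 2 * h) := sub_pos.mpr hexp_lt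
  have ha0 : 0 < a := ha ▸ mul_pos hy (sqrt_pos.mpr hs)
  have hay : a < y := ha ▸ mul_lt_of_lt_one_right hy
    ((sqrt_lt' one_pos).mpr (by linarith [exp_pos (-σ ^ 2 * h)]))
  have hratio : (a / y) ^ 2 = 1 - exp (-σ ^ 2 * h) := by
    rw [ha, mul_div_cancel_left₀ _ hy.ne', sq_sqrt hs.le]
  refine ⟨ha0, hay, ?_⟩
  simp_rw [div_mul_eq_div_div_swap, intervalIntegral.integral_div]
  rw [← mul_div_assoc, mul_integral_one_sub_abs_div_sq (abs_lt.mpr ⟨by linarith, hay⟩), hratio,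
    sub_sub_cancel, log_exp]
  field_simp [hσ.ne']
end

section
/- Let η : ℝ → ℝ be continuous with η(x) ≠ 0 for all x ∈ ℝ, and let K ⊆ ℝ be compact. Then sup_{y ∈ K} | ∫_{−1}^{1} η(y)² (1 − |z|) / η(y + √h · η(y) · z)² dz − 1 | converges to 0 as h → 0⁺. -/
/-!
Extending `√h` continuously to all `h : ℝ`, the integrand is jointly continuous in `(h, y, z)`
because `η` does not vanish, so the integral is jointly continuous in `(h, y)`. At `h = 0` it is
`∫ (1 - |z|) = 1`, and continuity in `h` is uniform for `y` in the compact set `K`.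
-/

open Set Filter Topology intervalIntegral MeasureTheory Function

lemma integral_one_sub_abs : ∫ z in (-1 : ℝ)..1, (1 - |z|) = 1 := by
  have hi (a b : ℝ) : IntervalIntegrable (fun z : ℝ => 1 - |z|) volume a b :=
    (continuous_const.sub continuous_abs).intervalIntegrable a b
  have hsymm : ∫ z in (-1 : ℝ)..0, (1 - |z|) = ∫ z in (0 : ℝ)..1, (1 - |z|) := by
    simpa using (integral_comp_neg (a := (0 : ℝ)) (b := 1) (fun z => 1 - |z|)).symm
  have hhalf : ∫ z in (0 : ℝ)..1, (1 - |z|) = 1 / 2 := by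
    rw [integral_congr (g := fun z => 1 - z) fun z hz => by
      rw [uIcc_of_le zero_le_one] at hz; simp [abs_of_nonneg hz.1]]
    rw [intervalIntegral.integral_sub intervalIntegrable_const intervalIntegrable_id]
    norm_num
  rw [← integral_add_adjacent_intervals (hi _ _) (hi _ _), hsymm, hhalf]
  norm_num

theorem IsCompact.tendsto_iSup_dist_of_continuous {α β E : Type*} [TopologicalSpace α]
    [TopologicalSpace β] [PseudoMetricSpace E] {k : Set β} (hk : IsCompact k)
    {f : α → β → E} (hf : Continuous (uncurry f)) (q : α) :
    Tendsto (fun p => ⨆ x ∈ k, dist (f p x) (f q x)) (𝓝 q) (𝓝 0) := by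
  rw [Metric.tendsto_nhds]
  intro ε hε
  obtain ⟨v, hv, hclose⟩ := hk.mem_uniformity_of_prod hf.continuousOn (mem_univ q)
    (Metric.dist_mem_uniformity (half_pos hε))
  rw [nhdsWithin_univ] at hv
  filter_upwards [hv] with p hp
  have hnonneg : 0 ≤ ⨆ x ∈ k, dist (f p x) (f q x) :=
    Real.iSup_nonneg fun x => Real.iSup_nonneg fun _ => dist_nonneg
  have hle : ⨆ x ∈ k, dist (f p x) (f q x) ≤ ε / 2 :=
    Real.iSup_le (fun x => Real.iSup_le (fun hx => (hclose p hp x hx).le) (half_pos hε).le)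
      (half_pos hε).le
  rw [Real.dist_0_eq_abs, abs_of_nonneg hnonneg]
  linarith

theorem weak_euler_condition_A (η : ℝ → ℝ) (hcont : Continuous η)
    (hne : ∀ x : ℝ, η x ≠ 0) (K : Set ℝ) (hK : IsCompact K) :
    Filter.Tendsto
      (fun h : ℝ => ⨆ y ∈ K,
        |(∫ z in (-1 : ℝ)..1,
            (η y)^2 * (1 - |z|) / (η (y + Real.sqrt h * η y * z))^2) - 1|)
      (nhdsWithin 0 (Set.Ioi 0)) (nhds 0) := by
  set F : ℝ → ℝ → ℝ := fun h y => ∫ z in (-1 : ℝ)..1,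
    (η y)^2 * (1 - |z|) / (η (y + Real.sqrt h * η y * z))^2
  have hF : Continuous (uncurry F) := continuous_parametric_intervalIntegral_of_continuous'
    (by exact Continuous.div (by fun_prop) (by fun_prop) fun _ => pow_ne_zero 2 (hne _)) _ _
  have hF0 (y : ℝ) : F 0 y = 1 := by
    simp [F, mul_div_cancel_left₀ _ (pow_ne_zero 2 (hne y)), integral_one_sub_abs]
  refine ((hK.tendsto_iSup_dist_of_continuous hF 0).mono_left nhdsWithin_le_nhds).congr
    fun h => ?_
  simp only [hF0, Real.dist_eq, F]
end

section
/- Define sets C_n ⊆ [0,1] by C_0 = [0,1] and C_{n+1} = (1/3)·C_n ∪ ((C_n + 2)/3). Then for every n ∈ ℕ, every h ∈ (0,1) and every y ∈ ℝ, there exists a unique a ∈ (0,∞) satisfying (1/2)(3/2)^n ∫_{y−a}^{y+a} 1_{C_n}(u) (a − |u − y|) du + a² = h, and moreover this unique solution satisfies a ≤ √h. -/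
/-!
For a nonnegative locally integrable weight `g` (here the indicator of `C_n`), the tent integral
`I(a) = ∫_{y-a}^{y+a} g(u) (a - |u - y|) du` is continuous in `a`, being a combination of primitives
of `g` and `g(u) |u - y|`, and nondecreasing for `a ≥ 0`, since the tent grows pointwise and so
does its support. Hence `F(a) = c I(a) + a²` is continuous and strictly increasing on `[0, ∞)` with
`F 0 = 0 ≤ h ≤ F √h`: the intermediate value theorem gives the root, strict monotonicity its
uniqueness, and `a² ≤ F a = h` the bound.
-/

open MeasureTheory

/-- The finite-stage approximations of the Cantor ternary set:
`C_0 = [0,1]` and `C_{n+1} = (1/3)·C_n ∪ (C_n + 2)/3`. -/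
def cantorApprox : ℕ → Set ℝ
  | 0 => Set.Icc 0 1
  | n + 1 => (fun x : ℝ => x / 3) '' cantorApprox n
      ∪ (fun x : ℝ => (x + 2) / 3) '' cantorApprox n

open Set

noncomputable def tentIntegral (g : ℝ → ℝ) (y a : ℝ) : ℝ :=
  ∫ u in (y - a)..(y + a), g u * (a - |u - y|)

section TentIntegral

variable {g : ℝ → ℝ}

@[simp]
theorem tentIntegral_zero (y : ℝ) : tentIntegral g y 0 = 0 := by
  simp [tentIntegral]

theorem MeasureTheory.LocallyIntegrable.intervalIntegrable (hg : LocallyIntegrable g) (s t : ℝ) :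
    IntervalIntegrable g volume s t :=
  (hg.integrableOn_isCompact isCompact_uIcc).intervalIntegrable

theorem continuous_intervalIntegral_sub_add (hg : LocallyIntegrable g) (y : ℝ) :
    Continuous fun a => ∫ u in (y - a)..(y + a), g u := by
  have hP := intervalIntegral.continuous_primitive hg.intervalIntegrable 0
  simp_rw [← intervalIntegral.integral_interval_sub_left (hg.intervalIntegrable 0 (y + _))
    (hg.intervalIntegrable 0 (y - _))]
  exact (hP.comp (by fun_prop)).sub (hP.comp (by fun_prop))

theorem continuous_tentIntegral (hg : LocallyIntegrable g) (y : ℝ) :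
    Continuous (tentIntegral g y) := by
  have hg' : LocallyIntegrable fun u => g u * |u - y| := hg.mul_continuous (by fun_prop)
  have hsplit : tentIntegral g y = fun a =>
      a * (∫ u in (y - a)..(y + a), g u) - ∫ u in (y - a)..(y + a), g u * |u - y| := by
    funext a
    rw [← intervalIntegral.integral_const_mul, ← intervalIntegral.integral_sub
      ((hg.intervalIntegrable _ _).const_mul a) (hg'.intervalIntegrable _ _)]
    simp only [tentIntegral, mul_sub, mul_comm a]
  rw [hsplit]
  exact (continuous_id.mul (continuous_intervalIntegral_sub_add hg y)).sub
    (continuous_intervalIntegral_sub_add hg' y)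

theorem tentIntegral_monotoneOn (hg0 : 0 ≤ g) (hg : LocallyIntegrable g) (y : ℝ) :
    MonotoneOn (tentIntegral g y) (Ici 0) := by
  intro a ha b hb hab
  have hint (c s t : ℝ) : IntervalIntegrable (fun u => g u * (c - |u - y|)) volume s t :=
    (hg.mul_continuous (by fun_prop)).intervalIntegrable s t
  calc tentIntegral g y a
      ≤ ∫ u in (y - a)..(y + a), g u * (b - |u - y|) :=
        intervalIntegral.integral_mono_on (by linarith [mem_Ici.1 ha]) (hint _ _ _) (hint _ _ _)
          fun u _ => mul_le_mul_of_nonneg_left (by linarith) (hg0 u)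
    _ ≤ tentIntegral g y b := by
        refine intervalIntegral.integral_mono_interval (by linarith) (by linarith [mem_Ici.1 ha])
          (by linarith) (ae_restrict_of_forall_mem measurableSet_Ioc fun u hu => ?_) (hint _ _ _)
        have : |u - y| ≤ b := abs_sub_le_iff.2 ⟨by linarith [hu.2], by linarith [hu.1]⟩
        exact mul_nonneg (hg0 u) (by linarith)

theorem tentIntegral_nonneg (hg0 : 0 ≤ g) (hg : LocallyIntegrable g) (y : ℝ) {a : ℝ}
    (ha : 0 ≤ a) : 0 ≤ tentIntegral g y a := by
  simpa using tentIntegral_monotoneOn hg0 hg y self_mem_Ici ha ha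

theorem existsUnique_pos_mul_tentIntegral_add_sq_eq (hg0 : 0 ≤ g) (hg : LocallyIntegrable g)
    (y : ℝ) {c h : ℝ} (hc : 0 ≤ c) (hh : 0 < h) :
    ∃! a : ℝ, 0 < a ∧ c * tentIntegral g y a + a ^ 2 = h := by
  set F : ℝ → ℝ := fun a => c * tentIntegral g y a + a ^ 2
  have hF_cont : Continuous F :=
    (continuous_const.mul (continuous_tentIntegral hg y)).add (continuous_pow 2)
  have hF_mono : StrictMonoOn F (Ici 0) := fun a ha b hb hab =>
    add_lt_add_of_le_of_lt
      (mul_le_mul_of_nonneg_left (tentIntegral_monotoneOn hg0 hg y ha hb hab.le) hc)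
      (pow_lt_pow_left₀ hab ha two_ne_zero)
  have hF_zero : F 0 = 0 := by simp [F]
  have hF_sqrt : h ≤ F √h := by
    have := mul_nonneg hc (tentIntegral_nonneg hg0 hg y (Real.sqrt_nonneg h))
    simp only [F, Real.sq_sqrt hh.le]
    linarith
  obtain ⟨a, ⟨ha0, -⟩, hFa⟩ := intermediate_value_Icc (Real.sqrt_nonneg h) hF_cont.continuousOn
    ⟨hF_zero.trans_le hh.le, hF_sqrt⟩
  have ha : 0 < a := ha0.lt_of_ne (by rintro rfl; exact hh.ne (hF_zero ▸ hFa))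
  exact ⟨a, ⟨ha, hFa⟩, fun b ⟨hb, hFb⟩ => hF_mono.injOn hb.le ha.le (hFb.trans hFa.symm)⟩

end TentIntegral

theorem isCompact_cantorApprox (n : ℕ) : IsCompact (cantorApprox n) := by
  induction n with
  | zero => exact isCompact_Icc
  | succ n ih => exact (ih.image (by fun_prop)).union (ih.image (by fun_prop))

theorem cantor_bm_scale_factor_general (n : ℕ) (h y : ℝ) (hh0 : 0 < h) :
    (∃! a : ℝ, 0 < a ∧
      (1 / 2) * (3 / 2 : ℝ)^n *
          (∫ u in (y - a)..(y + a),
            Set.indicator (cantorApprox n) (fun _ => (1 : ℝ)) u * (a - |u - y|))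
        + a^2 = h) ∧
    ∀ a : ℝ, 0 < a →
      (1 / 2) * (3 / 2 : ℝ)^n *
          (∫ u in (y - a)..(y + a),
            Set.indicator (cantorApprox n) (fun _ => (1 : ℝ)) u * (a - |u - y|))
        + a^2 = h →
      a ≤ Real.sqrt h := by
  set g := (cantorApprox n).indicator fun _ => (1 : ℝ)
  have hg0 : 0 ≤ g := indicator_nonneg fun _ _ => zero_le_one
  have hg : LocallyIntegrable g :=
    (locallyIntegrable_const 1).indicator (isCompact_cantorApprox n).isClosed.measurableSet
  have hc : (0 : ℝ) ≤ 1 / 2 * (3 / 2) ^ n := by positivity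
  refine ⟨existsUnique_pos_mul_tentIntegral_add_sq_eq hg0 hg y hc hh0, fun a ha hFa => ?_⟩
  have := mul_nonneg hc (tentIntegral_nonneg hg0 hg y ha.le)
  exact Real.le_sqrt_of_sq_le (by unfold tentIntegral at this; linarith)

theorem cantor_bm_scale_factor (n : ℕ) (h y : ℝ) (hh0 : 0 < h) (hh1 : h < 1) :
    (∃! a : ℝ, 0 < a ∧
      (1 / 2) * (3 / 2 : ℝ)^n *
          (∫ u in (y - a)..(y + a),
            Set.indicator (cantorApprox n) (fun _ => (1 : ℝ)) u * (a - |u - y|))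
        + a^2 = h) ∧
    ∀ a : ℝ, 0 < a →
      (1 / 2) * (3 / 2 : ℝ)^n *
          (∫ u in (y - a)..(y + a),
            Set.indicator (cantorApprox n) (fun _ => (1 : ℝ)) u * (a - |u - y|))
        + a^2 = h →
      a ≤ Real.sqrt h :=
  cantor_bm_scale_factor_general n h y hh0
end

section
/- Let μ and ν be finite Borel measures on ℝ with no atoms (i.e. μ({x}) = ν({x}) = 0 for every x ∈ ℝ). Then for every y ∈ ℝ and every a ≥ 0, | ∫_ℝ (a − |u − y|)⁺ μ(du) − ∫_ℝ (a − |u − y|)⁺ ν(du) | ≤ 2a · sup_{x ∈ ℝ} | μ((−∞, x]) − ν((−∞, x]) |. -/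
/-!
By the layer-cake formula, `∫ (a - |u - y|)⁺ dm = ∫₀ᵃ m (y - a + t, y + a - t) dt`. For an atomless
finite measure the open interval `(b, c)` has measure `F(c) - F(b)`, `F` the distribution function,
so at every level `t` the integrands for `μ` and `ν` differ by at most twice the Kolmogorov distance;
integrating over `t ∈ (0, a]` gives the factor `2a`.
-/

open MeasureTheory Set

section

variable {α : Type*} [MeasurableSpace α] [LinearOrder α] [TopologicalSpace α]
  [OrderClosedTopology α] [OpensMeasurableSpace α]

theorem measureReal_Ioo_eq_measureReal_Iic_sub (m : Measure α) [IsFiniteMeasure m]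
    {b c : α} (hc : m {c} = 0) (hbc : b ≤ c) :
    m.real (Ioo b c) = m.real (Iic c) - m.real (Iic b) := by
  rw [measureReal_congr (Ioo_ae_eq_Ioc' hc), ← Iic_sdiff_Iic,
    measureReal_sdiff (Iic_subset_Iic.mpr hbc) measurableSet_Iic]

theorem abs_measureReal_Ioo_sub_le (μ ν : Measure α) [IsFiniteMeasure μ] [IsFiniteMeasure ν]
    {C : ℝ} (hC : ∀ x, |μ.real (Iic x) - ν.real (Iic x)| ≤ C)
    {b c : α} (hμ : μ {c} = 0) (hν : ν {c} = 0) (hbc : b ≤ c) :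
    |μ.real (Ioo b c) - ν.real (Ioo b c)| ≤ 2 * C := by
  rw [measureReal_Ioo_eq_measureReal_Iic_sub μ hμ hbc,
    measureReal_Ioo_eq_measureReal_Iic_sub ν hν hbc]
  have hc := hC c
  have hb := hC b
  rw [abs_le] at hb hc ⊢
  constructor <;> linarith

end

theorem bddAbove_range_abs_measureReal_sub {α ι : Type*} [MeasurableSpace α]
    (μ ν : Measure α) [IsFiniteMeasure μ] [IsFiniteMeasure ν] (s : ι → Set α) :
    BddAbove (range fun i => |μ.real (s i) - ν.real (s i)|) := by
  refine ⟨μ.real univ + ν.real univ, forall_mem_range.mpr fun i => ?_⟩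
  have hμ : μ.real (s i) ≤ μ.real univ := measureReal_mono (subset_univ _)
  have hν : ν.real (s i) ≤ ν.real univ := measureReal_mono (subset_univ _)
  rw [abs_le]
  constructor <;> linarith [measureReal_nonneg (μ := μ) (s := s i),
    measureReal_nonneg (μ := ν) (s := s i)]

theorem setOf_lt_tent (y a : ℝ) {t : ℝ} (ht : 0 < t) :
    {u | t < max (a - |u - y|) 0} = Ioo (y - a + t) (y + a - t) := by
  ext u
  rw [mem_ofPred_eq, lt_max_iff, or_iff_left ht.not_gt, lt_sub_comm, abs_sub_lt_iff, mem_Ioo]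
  constructor <;> rintro ⟨h₁, h₂⟩ <;> constructor <;> linarith

theorem antitone_measureReal_Ioo_add_sub (m : Measure ℝ) [IsFiniteMeasure m] (b c : ℝ) :
    Antitone fun t => m.real (Ioo (b + t) (c - t)) := fun _ _ hst =>
  measureReal_mono (Ioo_subset_Ioo (by linarith) (by linarith))

theorem integral_tent_eq_intervalIntegral (m : Measure ℝ) [IsFiniteMeasure m] (y : ℝ)
    {a : ℝ} (ha : 0 ≤ a) :
    ∫ u, max (a - |u - y|) 0 ∂m = ∫ t in 0..a, m.real (Ioo (y - a + t) (y + a - t)) := by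
  have hint : Integrable (fun u => max (a - |u - y|) 0) m := by
    refine Integrable.of_bound (by fun_prop) a (Filter.Eventually.of_forall fun u => ?_)
    rw [Real.norm_eq_abs, abs_of_nonneg (le_max_right _ _)]
    exact max_le (by linarith [abs_nonneg (u - y)]) ha
  rw [hint.integral_eq_integral_meas_lt (Filter.Eventually.of_forall fun _ => le_max_right _ _),
    intervalIntegral.integral_of_le ha,
    setIntegral_eq_of_subset_of_forall_sdiff_eq_zero measurableSet_Ioi Ioc_subset_Ioi_self]
  · exact setIntegral_congr_fun measurableSet_Ioc fun t ht => by rw [setOf_lt_tent y a ht.1]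
  · intro t ⟨ht, hta⟩
    have hat : a < t := not_le.mp fun h => hta ⟨ht, h⟩
    rw [setOf_lt_tent y a ht, Ioo_eq_empty (by linarith), measureReal_empty]

theorem integral_posPart_diff_le_kolmogorov_dist
    (μ ν : Measure ℝ) [IsFiniteMeasure μ] [IsFiniteMeasure ν]
    (hμ : ∀ x : ℝ, μ {x} = 0) (hν : ∀ x : ℝ, ν {x} = 0)
    (y a : ℝ) (ha : 0 ≤ a) :
    |(∫ u, max (a - |u - y|) 0 ∂μ) - ∫ u, max (a - |u - y|) 0 ∂ν|
      ≤ 2 * a * ⨆ x : ℝ, |(μ (Set.Iic x)).toReal - (ν (Set.Iic x)).toReal| := by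
  set C := ⨆ x : ℝ, |(μ (Set.Iic x)).toReal - (ν (Set.Iic x)).toReal|
  have hC : ∀ x, |μ.real (Iic x) - ν.real (Iic x)| ≤ C :=
    le_ciSup (bddAbove_range_abs_measureReal_sub μ ν Iic)
  rw [integral_tent_eq_intervalIntegral μ y ha, integral_tent_eq_intervalIntegral ν y ha,
    ← intervalIntegral.integral_sub (antitone_measureReal_Ioo_add_sub μ _ _).intervalIntegrable
      (antitone_measureReal_Ioo_add_sub ν _ _).intervalIntegrable, ← Real.norm_eq_abs]
  refine (intervalIntegral.norm_integral_le_of_norm_le_const (C := 2 * C) fun t ht => ?_).trans_eq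
    ?_
  · rw [uIoc_of_le ha] at ht
    exact abs_measureReal_Ioo_sub_le μ ν hC (hμ _) (hν _) (by linarith [ht.2])
  · rw [sub_zero, abs_of_nonneg ha]
    ring
end
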